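/- For every f ∈ C(K,ℝ) with ℰ(f) < ∞, the Kuramoto energies converge to the Dirichlet energy along the constant sequence: limₙ 𝒥ₙ(f) = ℰ(f). -/

import Mathlib

/-!
Splitting the edges of `Γₙ₊₁` according to the `n`-cell containing them, and minimizing the
refined energy of one cell over its three new vertices (a quadratic problem whose minimum is
`3/5` of the coarse energy), shows that `ℰₙ(f)` is nondecreasing; hence `ℰₙ(f) → ℰ(f)`.
A single edge of `Γₙ` carries a squared increment of at most `4 (3/5)ⁿ ℰ(f)`, and
`0 ≤ t²/2 - (1 - cos t) ≤ t⁴/24`, so `0 ≤ ℰₙ(f) - 𝒥ₙ(f) ≤ (4π²/3) (3/5)ⁿ ℰ(f)² → 0`.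
-/

open Filter
open scoped ENNReal

noncomputable section

/-- Vertices of the base triangle. -/
def sgv1 : ℝ × ℝ := (0, 0)
def sgv2 : ℝ × ℝ := (1/2, Real.sqrt 3 / 2)
def sgv3 : ℝ × ℝ := (1, 0)

def sgvtx : Fin 3 → ℝ × ℝ
  | 0 => sgv1
  | 1 => sgv2
  | 2 => sgv3

/-- The contraction `F_i(x) = (x - v_i)/2 + v_i = (x + v_i)/2`. -/
def sgF (i : Fin 3) (x : ℝ × ℝ) : ℝ × ℝ := (1/2 : ℝ) • (x + sgvtx i)

/-- `F_w = F_{w₁} ∘ ⋯ ∘ F_{wₙ}` (empty word gives the identity). -/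
def sgFw (w : List (Fin 3)) : ℝ × ℝ → ℝ × ℝ :=
  w.foldr (fun i g => sgF i ∘ g) id

instance : DecidableEq (ℝ × ℝ) := Classical.decEq _

/-- The vertex sets `Vₙ`. -/
def sgV : ℕ → Finset (ℝ × ℝ)
  | 0 => {sgv1, sgv2, sgv3}
  | n + 1 => Finset.univ.biUnion fun i : Fin 3 => (sgV n).image (sgF i)

/-- Adjacency on `Γₙ`: distinct points lying in a common image `F_w(V₀)`, `|w| = n`. -/
def sgAdj (n : ℕ) (x y : ℝ × ℝ) : Prop :=
  x ≠ y ∧ ∃ w : List (Fin 3), w.length = n ∧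
    x ∈ (sgV 0).image (sgFw w) ∧ y ∈ (sgV 0).image (sgFw w)

open Classical in
/-- Discrete Dirichlet energy `ℰₙ` (each undirected edge counted once: we sum
over ordered pairs and halve). -/
def sgE (n : ℕ) (f : ℝ × ℝ → ℝ) : ℝ :=
  (5/3 : ℝ) ^ n * ((1:ℝ)/2) *
    ∑ x ∈ sgV n, ∑ y ∈ sgV n, if sgAdj n x y then (f y - f x) ^ 2 / 2 else 0

open Classical in
/-- Discrete Kuramoto energy `𝒥ₙ` (each undirected edge counted once). -/
def sgJ (n : ℕ) (f : ℝ × ℝ → ℝ) : ℝ :=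
  (5/3 : ℝ) ^ n * (1 / (4 * Real.pi ^ 2)) * ((1:ℝ)/2) *
    ∑ x ∈ sgV n, ∑ y ∈ sgV n,
      if sgAdj n x y then 1 - Real.cos (2 * Real.pi * (f y - f x)) else 0

open Classical in
/-- Discrete Laplacian `Δₘ`. -/
def sgLap (m : ℕ) (f : ℝ × ℝ → ℝ) (x : ℝ × ℝ) : ℝ :=
  (5/3 : ℝ) ^ m * ∑ y ∈ sgV m, if sgAdj m x y then f y - f x else 0

/-- `ℰ(f) = supₙ ℰₙ(f) ∈ [0,∞]`. -/
def sgEtot (f : ℝ × ℝ → ℝ) : ℝ≥0∞ :=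
  ⨆ n : ℕ, ENNReal.ofReal (sgE n f)

/-- The circle `𝕋 = ℝ/ℤ`. -/
abbrev 𝕋c := AddCircle (1 : ℝ)

/-- `HasWinding c k`: the loop `c : [0,1] → 𝕋` admits a continuous lift `ĉ` with
`ĉ(1) - ĉ(0) = k`. -/
def HasWinding (c : ℝ → 𝕋c) (k : ℤ) : Prop :=
  ∃ ch : ℝ → ℝ, ContinuousOn ch (Set.Icc 0 1) ∧
    (∀ t ∈ Set.Icc (0:ℝ) 1, ((ch t : ℝ) : 𝕋c) = c t) ∧ ch 1 - ch 0 = (k : ℝ)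

/-- Constant-speed clockwise parametrization of `∂T` starting at the leftmost
vertex `v₁`, passing through `v₂` and then `v₃`. -/
def sgc0 (t : ℝ) : ℝ × ℝ :=
  if t ≤ 1/3 then sgv1 + (3 * t) • (sgv2 - sgv1)
  else if t ≤ 2/3 then sgv2 + (3 * t - 1) • (sgv3 - sgv2)
  else sgv3 + (3 * t - 2) • (sgv1 - sgv3)

/-- Constant-speed clockwise parametrization of `∂T_w` starting at its leftmost
vertex `F_w(v₁)`. -/
def sgcw (w : List (Fin 3)) (t : ℝ) : ℝ × ℝ := sgFw w (sgc0 t)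


instance : Fact ((0:ℝ) < 1) := ⟨one_pos⟩

/-- `cos(2πθ)` for `θ ∈ 𝕋` (well defined via any representative). -/
def cosT (θ : 𝕋c) : ℝ :=
  Real.cos (2 * Real.pi * ((AddCircle.equivIco 1 0 θ : ℝ)))

open Classical in
/-- The `𝕋`-valued Kuramoto energy `𝒥ₙ` (each undirected edge counted once). -/
def sgJT (n : ℕ) (u : ℝ × ℝ → 𝕋c) : ℝ :=
  (5/3 : ℝ) ^ n * (1 / (4 * Real.pi ^ 2)) * ((1:ℝ)/2) *
    ∑ x ∈ sgV n, ∑ y ∈ sgV n,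
      if sgAdj n x y then 1 - cosT (u y - u x) else 0

lemma sgF_injective (i : Fin 3) : Function.Injective (sgF i) := fun a b h =>
  add_right_cancel (smul_right_injective (ℝ × ℝ) (by norm_num : (1/2 : ℝ) ≠ 0) h)

lemma sgF_sgvtx_self (i : Fin 3) : sgF i (sgvtx i) = sgvtx i := by
  rw [sgF, ← two_smul ℝ (sgvtx i), smul_smul]
  norm_num

lemma sgF_sgvtx_comm (i j : Fin 3) : sgF i (sgvtx j) = sgF j (sgvtx i) := by
  rw [sgF, sgF, add_comm]

lemma sgvtx_injective : Function.Injective sgvtx := by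
  have : Real.sqrt 3 / 2 ≠ 0 := by positivity
  intro a b hab
  fin_cases a <;> fin_cases b <;> simp_all [sgvtx, sgv1, sgv2, sgv3, Prod.ext_iff]

/-- Barycentric coordinates with respect to `v₁, v₂, v₃` (indexed `0, 1, 2`). -/
def sgBary : Fin 3 → ℝ × ℝ → ℝ
  | 0, p => 1 - p.1 - p.2 / Real.sqrt 3
  | 1, p => 2 * p.2 / Real.sqrt 3
  | 2, p => p.1 - p.2 / Real.sqrt 3

lemma sum_sgBary (p : ℝ × ℝ) : ∑ i, sgBary i p = 1 := by
  simp only [Fin.sum_univ_three, sgBary]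
  ring

lemma sgBary_midpoint (i : Fin 3) (p q : ℝ × ℝ) :
    sgBary i ((1/2 : ℝ) • (p + q)) = (sgBary i p + sgBary i q) / 2 := by
  fin_cases i <;>
    simp only [sgBary, Prod.smul_fst, Prod.smul_snd, Prod.fst_add, Prod.snd_add, smul_eq_mul] <;>
    ring

lemma sgBary_sgvtx (i j : Fin 3) : sgBary i (sgvtx j) = if i = j then 1 else 0 := by
  have : Real.sqrt 3 ≠ 0 := by positivity
  fin_cases i <;> fin_cases j <;> norm_num [sgBary, sgvtx, sgv1, sgv2, sgv3,
    div_div_cancel_left' this, mul_div_cancel₀ _ (two_ne_zero (α := ℝ))]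

lemma sgBary_sgF (i j : Fin 3) (p : ℝ × ℝ) :
    sgBary i (sgF j p) = (sgBary i p + if i = j then 1 else 0) / 2 := by
  rw [sgF, sgBary_midpoint, sgBary_sgvtx]

lemma eq_of_sgBary_eq {p q : ℝ × ℝ} (h1 : sgBary 1 p = sgBary 1 q)
    (h2 : sgBary 2 p = sgBary 2 q) : p = q := by
  have : Real.sqrt 3 ≠ 0 := by positivity
  simp only [sgBary] at h1 h2
  have e2 : p.2 = q.2 := by field_simp at h1; exact h1
  exact Prod.ext (by rw [e2] at h2; linarith) e2

def sgTriangle : Set (ℝ × ℝ) := {p | ∀ i, 0 ≤ sgBary i p}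

lemma sgvtx_mem_sgTriangle (j : Fin 3) : sgvtx j ∈ sgTriangle := by
  intro i
  rw [sgBary_sgvtx]
  split <;> norm_num

lemma mapsTo_sgF_sgTriangle (j : Fin 3) : Set.MapsTo (sgF j) sgTriangle sgTriangle := by
  intro p hp i
  rw [sgBary_sgF]
  have := hp i
  split <;> linarith

lemma half_le_sgBary_of_mem_image {j : Fin 3} {x : ℝ × ℝ} (hx : x ∈ sgF j '' sgTriangle) :
    1/2 ≤ sgBary j x := by
  obtain ⟨p, hp, rfl⟩ := hx
  rw [sgBary_sgF, if_pos rfl]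
  linarith [hp j]

lemma sgF_image_inter_subsingleton {i j : Fin 3} (hij : i ≠ j) :
    (sgF i '' sgTriangle ∩ sgF j '' sgTriangle).Subsingleton := by
  -- the coordinates `i` and `j` are both `≥ 1/2`, which pins all three of them
  have key : ∀ x ∈ sgF i '' sgTriangle ∩ sgF j '' sgTriangle, ∀ k,
      sgBary k x = if k = i ∨ k = j then 1/2 else 0 := by
    rintro x ⟨hxi, hxj⟩ k
    have h0 := (mapsTo_sgF_sgTriangle i).image_subset hxi
    have hs := sum_sgBary x
    have hi := half_le_sgBary_of_mem_image hxi
    have hj := half_le_sgBary_of_mem_image hxj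
    simp only [Fin.sum_univ_three] at hs
    have := h0 0; have := h0 1; have := h0 2
    fin_cases i <;> fin_cases j <;> fin_cases k <;> simp_all <;> linarith
  intro x hx y hy
  exact eq_of_sgBary_eq (by rw [key x hx, key y hy]) (by rw [key x hx, key y hy])

lemma sgFw_cons (i : Fin 3) (w : List (Fin 3)) : sgFw (i :: w) = sgF i ∘ sgFw w := rfl

lemma sgFw_append (w₁ w₂ : List (Fin 3)) : sgFw (w₁ ++ w₂) = sgFw w₁ ∘ sgFw w₂ := by
  induction w₁ with
  | nil => rfl
  | cons i w ih => rw [List.cons_append, sgFw_cons, sgFw_cons, ih, Function.comp_assoc]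

lemma sgFw_ofFn_snoc {n : ℕ} (w : Fin n → Fin 3) (k : Fin 3) :
    sgFw (List.ofFn (Fin.snoc w k)) = sgFw (List.ofFn w) ∘ sgF k := by
  rw [List.ofFn_succ', List.concat_eq_append, sgFw_append]
  simp [sgFw]

lemma sgFw_injective (w : List (Fin 3)) : Function.Injective (sgFw w) := by
  induction w with
  | nil => exact Function.injective_id
  | cons i w ih => exact (sgF_injective i).comp ih

lemma mapsTo_sgFw_sgTriangle (w : List (Fin 3)) :
    Set.MapsTo (sgFw w) sgTriangle sgTriangle := by
  induction w with
  | nil => exact Set.mapsTo_id _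
  | cons i w ih => exact (mapsTo_sgF_sgTriangle i).comp ih

lemma eq_of_mem_sgFw_image {w w' : List (Fin 3)} (hl : w.length = w'.length) {x y : ℝ × ℝ}
    (hxy : x ≠ y) (hx : x ∈ sgFw w '' sgTriangle) (hy : y ∈ sgFw w '' sgTriangle)
    (hx' : x ∈ sgFw w' '' sgTriangle) (hy' : y ∈ sgFw w' '' sgTriangle) : w = w' := by
  induction w generalizing w' x y with
  | nil => exact (List.length_eq_zero_iff.1 hl.symm).symm
  | cons i w ih =>
    obtain _ | ⟨j, w'⟩ := w'
    · simp at hl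
    rw [sgFw_cons, Set.image_comp] at hx hy hx' hy'
    obtain rfl | hij := eq_or_ne i j
    · obtain ⟨a, ha, rfl⟩ := hx
      obtain ⟨b, hb, rfl⟩ := hy
      rw [(sgF_injective i).mem_set_image] at hx' hy'
      rw [ih (Nat.succ.inj hl) (fun h => hxy (congrArg (sgF i) h)) ha hb hx' hy']
    · have hT : ∀ v u, sgF v '' (sgFw u '' sgTriangle) ⊆ sgF v '' sgTriangle :=
        fun v u => Set.image_mono (mapsTo_sgFw_sgTriangle u).image_subset
      exact absurd (sgF_image_inter_subsingleton hij ⟨hT i w hx, hT j w' hx'⟩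
        ⟨hT i w hy, hT j w' hy'⟩) hxy

lemma mem_sgV_zero {u : ℝ × ℝ} : u ∈ sgV 0 ↔ ∃ i, sgvtx i = u := by
  simp only [sgV, Finset.mem_insert, Finset.mem_singleton, Fin.exists_fin_succ, sgvtx]
  aesop

lemma sgFw_sgvtx_mem_sgV (w : List (Fin 3)) (i : Fin 3) : sgFw w (sgvtx i) ∈ sgV w.length := by
  induction w with
  | nil => exact mem_sgV_zero.2 ⟨i, rfl⟩
  | cons j w ih =>
    exact Finset.mem_biUnion.2 ⟨j, Finset.mem_univ j, Finset.mem_image_of_mem (sgF j) ih⟩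

section Edges

open Classical

def sgEdges (n : ℕ) : Finset ((ℝ × ℝ) × (ℝ × ℝ)) :=
  (sgV n ×ˢ sgV n).filter fun p => sgAdj n p.1 p.2

lemma sum_sgV_ite_sgAdj (n : ℕ) (G : ℝ × ℝ → ℝ × ℝ → ℝ) :
    ∑ x ∈ sgV n, ∑ y ∈ sgV n, (if sgAdj n x y then G x y else 0) =
      ∑ p ∈ sgEdges n, G p.1 p.2 := by
  rw [sgEdges, Finset.sum_filter, Finset.sum_product]

def sgCellEdge {n : ℕ} (c : (Fin n → Fin 3) × Fin 3 × Fin 3) : (ℝ × ℝ) × (ℝ × ℝ) :=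
  (sgFw (List.ofFn c.1) (sgvtx c.2.1), sgFw (List.ofFn c.1) (sgvtx c.2.2))

lemma sgCellEdge_mem_sgEdges {n : ℕ} {c : (Fin n → Fin 3) × Fin 3 × Fin 3}
    (hc : c.2.1 ≠ c.2.2) : sgCellEdge c ∈ sgEdges n := by
  obtain ⟨w, i, j⟩ := c
  have hV : ∀ k, sgFw (List.ofFn w) (sgvtx k) ∈ sgV n := fun k => by
    simpa using sgFw_sgvtx_mem_sgV (List.ofFn w) k
  refine Finset.mem_filter.2 ⟨Finset.mem_product.2 ⟨hV i, hV j⟩, ?_, List.ofFn w,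
    List.length_ofFn, ?_, ?_⟩
  · exact fun h => hc (sgvtx_injective (sgFw_injective _ h))
  all_goals exact Finset.mem_image_of_mem _ (mem_sgV_zero.2 ⟨_, rfl⟩)

lemma sgCellEdge_injOn (n : ℕ) :
    Set.InjOn (sgCellEdge (n := n)) {c | c.2.1 ≠ c.2.2} := by
  rintro ⟨w, i, j⟩ hij ⟨w', i', j'⟩ - h
  simp only [sgCellEdge, Prod.mk.injEq] at h
  have hT : ∀ (u : List (Fin 3)) k, sgFw u (sgvtx k) ∈ sgFw u '' sgTriangle :=
    fun u k => Set.mem_image_of_mem _ (sgvtx_mem_sgTriangle k)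
  have hw : List.ofFn w = List.ofFn w' :=
    eq_of_mem_sgFw_image (by simp) (fun h => hij (sgvtx_injective (sgFw_injective _ h)))
      (hT _ i) (hT _ j) (h.1 ▸ hT _ i') (h.2 ▸ hT _ j')
  rw [hw] at h
  simp only [List.ofFn_injective hw, Prod.mk.injEq, true_and]
  exact ⟨sgvtx_injective (sgFw_injective _ h.1), sgvtx_injective (sgFw_injective _ h.2)⟩

lemma sgCellEdge_surjOn (n : ℕ) :
    Set.SurjOn (sgCellEdge (n := n)) {c | c.2.1 ≠ c.2.2} (sgEdges n) := by
  rintro ⟨x, y⟩ hp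
  obtain ⟨-, hxy, w, rfl, hx, hy⟩ := Finset.mem_filter.1 hp
  obtain ⟨u, hu, rfl⟩ := Finset.mem_image.1 hx
  obtain ⟨v, hv, rfl⟩ := Finset.mem_image.1 hy
  obtain ⟨i, rfl⟩ := mem_sgV_zero.1 hu
  obtain ⟨j, rfl⟩ := mem_sgV_zero.1 hv
  exact ⟨(w.get, i, j), fun h : i = j => hxy (h ▸ rfl), by simp [sgCellEdge]⟩

/-- Every edge of `Γₙ` is an edge of exactly one `n`-cell. -/
lemma sum_sgEdges_eq_sum_cells (n : ℕ) (G : ℝ × ℝ → ℝ × ℝ → ℝ) :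
    ∑ p ∈ sgEdges n, G p.1 p.2 = ∑ w : Fin n → Fin 3, ∑ i, ∑ j,
      if i ≠ j then G (sgFw (List.ofFn w) (sgvtx i)) (sgFw (List.ofFn w) (sgvtx j)) else 0 := by
  have hcells : ∑ w : Fin n → Fin 3, ∑ i, ∑ j,
      (if i ≠ j then G (sgFw (List.ofFn w) (sgvtx i)) (sgFw (List.ofFn w) (sgvtx j)) else 0) =
      ∑ c : (Fin n → Fin 3) × Fin 3 × Fin 3 with c.2.1 ≠ c.2.2,
        G (sgCellEdge c).1 (sgCellEdge c).2 := by
    simp only [Finset.sum_filter, Fintype.sum_prod_type, sgCellEdge]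
  rw [hcells, eq_comm]
  refine Finset.sum_nbij sgCellEdge
    (fun c hc => sgCellEdge_mem_sgEdges (Finset.mem_filter.1 hc).2)
    ((sgCellEdge_injOn n).mono fun c hc => (Finset.mem_filter.1 hc).2) ?_ fun _ _ => rfl
  intro p hp
  obtain ⟨c, hc, rfl⟩ := sgCellEdge_surjOn n hp
  exact ⟨c, by simpa using hc, rfl⟩

end Edges

lemma sgE_eq_sum_sgEdges (n : ℕ) (f : ℝ × ℝ → ℝ) :
    sgE n f = (5/3 : ℝ) ^ n / 2 * ∑ p ∈ sgEdges n, (f p.2 - f p.1) ^ 2 / 2 := by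
  rw [sgE, sum_sgV_ite_sgAdj n fun x y => (f y - f x) ^ 2 / 2]
  ring

lemma sgJ_eq_sum_sgEdges (n : ℕ) (f : ℝ × ℝ → ℝ) :
    sgJ n f = (5/3 : ℝ) ^ n / 2 *
      ∑ p ∈ sgEdges n, (1 - Real.cos (2 * Real.pi * (f p.2 - f p.1))) / (4 * Real.pi ^ 2) := by
  rw [sgJ, sum_sgV_ite_sgAdj n fun x y => 1 - Real.cos (2 * Real.pi * (f y - f x)),
    ← Finset.sum_div]
  ring

lemma sgE_nonneg (n : ℕ) (f : ℝ × ℝ → ℝ) : 0 ≤ sgE n f := by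
  rw [sgE_eq_sum_sgEdges]
  exact mul_nonneg (by positivity) (Finset.sum_nonneg fun _ _ => by positivity)

def sgCellEnergy (g : ℝ × ℝ → ℝ) : ℝ :=
  ∑ i, ∑ j, if i ≠ j then (g (sgvtx j) - g (sgvtx i)) ^ 2 / 2 else 0

lemma sgCellEnergy_eq (g : ℝ × ℝ → ℝ) :
    sgCellEnergy g = (g (sgvtx 1) - g (sgvtx 0)) ^ 2 + (g (sgvtx 2) - g (sgvtx 0)) ^ 2 +
      (g (sgvtx 2) - g (sgvtx 1)) ^ 2 := by
  simp only [sgCellEnergy, Fin.sum_univ_three, Fin.isValue, ne_eq, not_true_eq_false, if_false,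
    Fin.reduceEq, not_false_eq_true, if_true]
  ring

lemma sgE_eq_sum_sgCellEnergy (n : ℕ) (f : ℝ × ℝ → ℝ) :
    sgE n f =
      (5/3 : ℝ) ^ n / 2 * ∑ w : Fin n → Fin 3, sgCellEnergy (f ∘ sgFw (List.ofFn w)) := by
  rw [sgE_eq_sum_sgEdges, sum_sgEdges_eq_sum_cells n fun x y => (f y - f x) ^ 2 / 2]
  rfl

/-- Equality holds for the harmonic extension `x = (2a + 2b + c)/5`, … : this is where the
renormalization factor `5/3` of the gasket comes from. -/
lemma sum_sq_sub_le_five_thirds_mul_refined (a b c x y z : ℝ) :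
    (b - a) ^ 2 + (c - a) ^ 2 + (c - b) ^ 2 ≤
      5/3 * (((x - a) ^ 2 + (y - a) ^ 2 + (y - x) ^ 2) + ((b - x) ^ 2 + (z - x) ^ 2 + (z - b) ^ 2)
        + ((z - y) ^ 2 + (c - y) ^ 2 + (c - z) ^ 2)) := by
  nlinarith [sq_nonneg (5*x-2*a-2*b-c), sq_nonneg (5*y-2*a-2*c-b), sq_nonneg (5*z-a-2*b-2*c),
    sq_nonneg (5*x-5*y-b+c), sq_nonneg (5*x-5*z-a+c), sq_nonneg (5*y-5*z-a+b)]

lemma sgCellEnergy_le_sum_sgF (g : ℝ × ℝ → ℝ) :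
    sgCellEnergy g ≤ 5/3 * ∑ k, sgCellEnergy (g ∘ sgF k) := by
  simp only [sgCellEnergy_eq, Fin.sum_univ_three, Function.comp_apply, sgF_sgvtx_self,
    sgF_sgvtx_comm 1 0, sgF_sgvtx_comm 2 0, sgF_sgvtx_comm 2 1]
  exact sum_sq_sub_le_five_thirds_mul_refined _ _ _ _ _ _

lemma sum_fin_succ_pi_eq_sum_snoc {α M : Type*} [Fintype α] [AddCommMonoid M] {n : ℕ}
    (g : (Fin (n + 1) → α) → M) :
    ∑ w, g w = ∑ w : Fin n → α, ∑ k, g (Fin.snoc w k) := by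
  rw [← Fintype.sum_equiv (Fin.snocEquiv fun _ => α) (fun p => g (Fin.snoc p.2 p.1)) g
    fun _ => rfl, Fintype.sum_prod_type, Finset.sum_comm]

lemma sgE_mono (f : ℝ × ℝ → ℝ) : Monotone fun n => sgE n f := by
  refine monotone_nat_of_le_succ fun n => ?_
  simp only [sgE_eq_sum_sgCellEnergy, sum_fin_succ_pi_eq_sum_snoc, sgFw_ofFn_snoc]
  calc (5/3 : ℝ) ^ n / 2 * ∑ w : Fin n → Fin 3, sgCellEnergy (f ∘ sgFw (List.ofFn w))
      ≤ (5/3 : ℝ) ^ n / 2 * ∑ w : Fin n → Fin 3,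
          5/3 * ∑ k, sgCellEnergy (f ∘ sgFw (List.ofFn w) ∘ sgF k) := by
        gcongr with w
        exact sgCellEnergy_le_sum_sgF _
    _ = (5/3 : ℝ) ^ (n + 1) / 2 * ∑ w : Fin n → Fin 3,
          ∑ k, sgCellEnergy (f ∘ sgFw (List.ofFn w) ∘ sgF k) := by
        rw [← Finset.mul_sum, pow_succ]
        ring

lemma sgE_le_toReal_sgEtot {f : ℝ × ℝ → ℝ} (hE : sgEtot f ≠ ⊤) (n : ℕ) :
    sgE n f ≤ (sgEtot f).toReal := by
  rw [← ENNReal.toReal_ofReal (sgE_nonneg n f)]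
  exact ENNReal.toReal_mono hE (le_iSup (fun n => ENNReal.ofReal (sgE n f)) n)

lemma tendsto_sgE {f : ℝ × ℝ → ℝ} (hE : sgEtot f ≠ ⊤) :
    Tendsto (fun n => sgE n f) atTop (nhds (sgEtot f).toReal) := by
  have hsup : (sgEtot f).toReal = ⨆ n, sgE n f := by
    rw [sgEtot, ENNReal.toReal_iSup fun _ => ENNReal.ofReal_ne_top]
    exact iSup_congr fun n => ENNReal.toReal_ofReal (sgE_nonneg n f)
  rw [hsup]
  exact tendsto_atTop_ciSup (sgE_mono f) ⟨_, Set.forall_mem_range.2 (sgE_le_toReal_sgEtot hE)⟩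

lemma sq_div_two_sub_le_one_sub_cos (t : ℝ) : t ^ 2 / 2 - t ^ 4 / 24 ≤ 1 - Real.cos t := by
  set s := t / 2
  -- `1 - cos t = 2 sin² s`, and `s² - sin² s = (s - sin s)(s + sin s) ≤ (|s|³/6)(2|s|)`
  have hcos : 1 - Real.cos t = 2 * Real.sin s ^ 2 := by
    rw [Real.sin_sq_eq_half_sub, show 2 * s = t by ring]
    ring
  have hsin : s ^ 2 - Real.sin s ^ 2 ≤ |s| ^ 3 / 6 * (2 * |s|) :=
    calc s ^ 2 - Real.sin s ^ 2 = (s - Real.sin s) * (s + Real.sin s) := by ring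
      _ ≤ |s - Real.sin s| * |s + Real.sin s| := by rw [← abs_mul]; exact le_abs_self _
      _ ≤ |s| ^ 3 / 6 * (2 * |s|) := by
        gcongr
        · exact Real.abs_sub_sin_le s
        · linarith [abs_add_le s (Real.sin s), Real.abs_sin_le_abs (x := s)]
  have hs4 : |s| ^ 3 / 6 * (2 * |s|) = t ^ 4 / 48 := by
    rw [show |s| ^ 3 / 6 * (2 * |s|) = |s| ^ 4 / 3 by ring, pow_abs, abs_of_nonneg (by positivity)]
    ring
  have ht : t ^ 2 / 2 = 2 * s ^ 2 := by ring
  linarith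

lemma sq_div_two_sub_kuramoto_le {d M : ℝ} (hd : d ^ 2 ≤ M) :
    d ^ 2 / 2 - (1 - Real.cos (2 * Real.pi * d)) / (4 * Real.pi ^ 2) ≤
      Real.pi ^ 2 / 3 * M * (d ^ 2 / 2) := by
  have hπ : 0 < Real.pi := Real.pi_pos
  have hd4 : d ^ 4 ≤ M * d ^ 2 := by
    rw [show d ^ 4 = d ^ 2 * d ^ 2 by ring]
    gcongr
  calc d ^ 2 / 2 - (1 - Real.cos (2 * Real.pi * d)) / (4 * Real.pi ^ 2)
      = ((2 * Real.pi * d) ^ 2 / 2 - (1 - Real.cos (2 * Real.pi * d))) / (4 * Real.pi ^ 2) := by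
        field_simp
        ring
    _ ≤ (2 * Real.pi * d) ^ 4 / 24 / (4 * Real.pi ^ 2) := by
        gcongr
        linarith [sq_div_two_sub_le_one_sub_cos (2 * Real.pi * d)]
    _ = Real.pi ^ 2 / 6 * d ^ 4 := by
        field_simp
        ring
    _ ≤ Real.pi ^ 2 / 3 * M * (d ^ 2 / 2) := by nlinarith

lemma kuramoto_le_sq_div_two (d : ℝ) :
    (1 - Real.cos (2 * Real.pi * d)) / (4 * Real.pi ^ 2) ≤ d ^ 2 / 2 := by
  rw [div_le_iff₀ (by positivity)]
  nlinarith [Real.one_sub_sq_div_two_le_cos (x := 2 * Real.pi * d)]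

lemma sgJ_le_sgE (n : ℕ) (f : ℝ × ℝ → ℝ) : sgJ n f ≤ sgE n f := by
  rw [sgJ_eq_sum_sgEdges, sgE_eq_sum_sgEdges]
  exact mul_le_mul_of_nonneg_left (Finset.sum_le_sum fun _ _ => kuramoto_le_sq_div_two _)
    (by positivity)

lemma sq_sub_le_of_mem_sgEdges {n : ℕ} {p : (ℝ × ℝ) × (ℝ × ℝ)} (hp : p ∈ sgEdges n)
    (f : ℝ × ℝ → ℝ) : (f p.2 - f p.1) ^ 2 ≤ 4 * (3/5 : ℝ) ^ n * sgE n f := by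
  have hsingle : (f p.2 - f p.1) ^ 2 / 2 ≤ ∑ q ∈ sgEdges n, (f q.2 - f q.1) ^ 2 / 2 :=
    Finset.single_le_sum (f := fun q => (f q.2 - f q.1) ^ 2 / 2) (fun _ _ => by positivity) hp
  calc (f p.2 - f p.1) ^ 2
      = 4 * (3/5 : ℝ) ^ n * ((5/3 : ℝ) ^ n / 2 * ((f p.2 - f p.1) ^ 2 / 2)) := by
        rw [show 4 * (3/5 : ℝ) ^ n * ((5/3 : ℝ) ^ n / 2 * ((f p.2 - f p.1) ^ 2 / 2)) =
          ((3/5 : ℝ) ^ n * (5/3 : ℝ) ^ n) * (f p.2 - f p.1) ^ 2 by ring, ← mul_pow]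
        norm_num
    _ ≤ 4 * (3/5 : ℝ) ^ n * sgE n f := by
        rw [sgE_eq_sum_sgEdges]
        gcongr

lemma sgE_sub_sgJ_le (n : ℕ) (f : ℝ × ℝ → ℝ) :
    sgE n f - sgJ n f ≤ 4 * Real.pi ^ 2 / 3 * (3/5 : ℝ) ^ n * sgE n f ^ 2 := by
  set M := 4 * (3/5 : ℝ) ^ n * sgE n f with hM
  calc sgE n f - sgJ n f
      = (5/3 : ℝ) ^ n / 2 * ∑ p ∈ sgEdges n, ((f p.2 - f p.1) ^ 2 / 2 -
          (1 - Real.cos (2 * Real.pi * (f p.2 - f p.1))) / (4 * Real.pi ^ 2)) := by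
        rw [sgE_eq_sum_sgEdges, sgJ_eq_sum_sgEdges, Finset.sum_sub_distrib, mul_sub]
    _ ≤ (5/3 : ℝ) ^ n / 2 *
          ∑ p ∈ sgEdges n, Real.pi ^ 2 / 3 * M * ((f p.2 - f p.1) ^ 2 / 2) := by
        gcongr with p hp
        exact sq_div_two_sub_kuramoto_le (sq_sub_le_of_mem_sgEdges hp f)
    _ = 4 * Real.pi ^ 2 / 3 * (3/5 : ℝ) ^ n * sgE n f ^ 2 := by
        rw [← Finset.mul_sum, mul_left_comm, ← sgE_eq_sum_sgEdges, hM]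
        ring

theorem statement9_general
    (f : ℝ × ℝ → ℝ) (hE : sgEtot f < ⊤) :
    Filter.Tendsto (fun n => sgJ n f) Filter.atTop (nhds (sgEtot f).toReal) := by
  set E := (sgEtot f).toReal
  have hgap : Tendsto (fun n => 4 * Real.pi ^ 2 / 3 * (3/5 : ℝ) ^ n * E ^ 2) atTop (nhds 0) := by
    simpa using ((tendsto_pow_atTop_nhds_zero_of_lt_one (by norm_num : (0:ℝ) ≤ 3/5)
      (by norm_num)).const_mul (4 * Real.pi ^ 2 / 3)).mul_const (E ^ 2)
  have hdiff : Tendsto (fun n => sgE n f - sgJ n f) atTop (nhds 0) := by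
    refine squeeze_zero (fun n => sub_nonneg.2 (sgJ_le_sgE n f)) (fun n => ?_) hgap
    refine (sgE_sub_sgJ_le n f).trans ?_
    gcongr
    exacts [sgE_nonneg n f, sgE_le_toReal_sgEtot hE.ne n]
  simpa using (tendsto_sgE hE.ne).sub hdiff

/-- For every `f ∈ C(K,ℝ)` with `ℰ(f) < ∞`, the Kuramoto
energies converge along the constant sequence: `limₙ 𝒥ₙ(f) = ℰ(f)`. -/
theorem statement9
    (K : Set (ℝ × ℝ)) (hKne : K.Nonempty) (hKcpt : IsCompact K)
    (hKfix : K = ⋃ i : Fin 3, sgF i '' K)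
    (f : ℝ × ℝ → ℝ) (hf : ContinuousOn f K) (hE : sgEtot f < ⊤) :
    Filter.Tendsto (fun n => sgJ n f) Filter.atTop (nhds (sgEtot f).toReal) :=
  statement9_general f hE

end
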